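/- Suppose g₁, g₂ : S¹ → S¹ are orientation-preserving homeomorphisms and B ⊆ S¹ is a nonempty set with g₁(B) = B and g₁ restricted to B equals g₂ restricted to B. Then g₁ and g₂ have the same rotation number. -/

import Mathlib

/-!
A strictly increasing lift `G` of a circle homeomorphism satisfies `G (θ + 1) = G θ + 1`, so the
rotation number is the translation number of a `CircleDeg1Lift`. Over a point of `B` the lifts
`G₁` and `G₂` project to the same point, so `G₂ - G₁` is an integer there; strict monotonicity
forces this integer `a` to be the same at all lifts of points of `B`. Since `B` is `g₁`-invariant,
induction along a `G₁`-orbit starting over `B` gives `G₂ⁿ θ₀ = G₁ⁿ θ₀ + n a`, hence the translation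
numbers differ by `a`.
-/

open Filter Topology Function Set

lemma sphere_param_eq_iff_exists_int {P : ℝ → Metric.sphere (0:ℂ) 1}
    (hP : ∀ θ : ℝ, (P θ : ℂ) = Complex.exp (2 * Real.pi * θ * Complex.I)) (θ θ' : ℝ) :
    P θ = P θ' ↔ ∃ m : ℤ, θ = θ' + m := by
  have h2pi : 2 * (Real.pi : ℂ) * Complex.I ≠ 0 := by simp [Real.pi_ne_zero]
  rw [Subtype.ext_iff, hP, hP, Complex.exp_eq_exp_iff_exists_int]
  refine exists_congr fun m => ⟨fun h => ?_, fun h => by rw [h]; push_cast; ring⟩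
  have : (θ : ℂ) * (2 * Real.pi * Complex.I) = (θ' + m) * (2 * Real.pi * Complex.I) := by
    linear_combination h
  exact_mod_cast mul_right_cancel₀ h2pi this

lemma sphere_param_surjective {P : ℝ → Metric.sphere (0:ℂ) 1}
    (hP : ∀ θ : ℝ, (P θ : ℂ) = Complex.exp (2 * Real.pi * θ * Complex.I)) : Surjective P := by
  intro b
  refine ⟨(b : ℂ).arg / (2 * Real.pi), Subtype.ext ?_⟩
  have hnorm : ‖(b : ℂ)‖ = 1 := by simp
  conv_rhs => rw [← Complex.norm_mul_exp_arg_mul_I (b : ℂ), hnorm]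
  rw [hP]
  push_cast
  field_simp

namespace CircleDeg1Lift

variable {f₁ f₂ : CircleDeg1Lift}

lemma tendsto_iterate_div (f : CircleDeg1Lift) (x : ℝ) :
    Tendsto (fun n : ℕ => f^[n] x / n) atTop (𝓝 f.translationNumber) := by
  have := (f.tendsto_translationNumber x).add (tendsto_const_div_atTop_nhds_zero_nat x)
  rw [add_zero] at this
  refine this.congr fun n => ?_
  rw [coe_pow]
  ring

lemma sub_eq_sub_of_forall_exists_int (h₁ : StrictMono f₁) (h₂ : StrictMono f₂) {S : Set ℝ}
    (hS : ∀ θ ∈ S, ∀ m : ℤ, θ + m ∈ S) (hint : ∀ θ ∈ S, ∃ m : ℤ, f₂ θ = f₁ θ + m)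
    {θ θ' : ℝ} (hθ : θ ∈ S) (hθ' : θ' ∈ S) : f₂ θ' - f₁ θ' = f₂ θ - f₁ θ := by
  set θ'' := θ' + ((-⌊θ' - θ⌋ : ℤ) : ℝ)
  have hθ'' : f₂ θ'' - f₁ θ'' = f₂ θ' - f₁ θ' := by
    simp only [θ'', map_add_int]; ring
  rw [← hθ'']
  have hle : θ ≤ θ'' := by push_cast [θ'']; linarith [Int.floor_le (θ' - θ)]
  have hlt : θ'' < θ + 1 := by push_cast [θ'']; linarith [Int.lt_floor_add_one (θ' - θ)]
  rcases hle.eq_or_lt with heq | hlt'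
  · rw [heq]
  obtain ⟨m, hm⟩ := hint θ hθ
  obtain ⟨m'', hm''⟩ := hint θ'' (hS θ' hθ' _)
  -- on `(θ, θ + 1)` both lifts move by less than a full turn relative to their value at `θ`
  have b₁ := h₁ hlt'; have b₁' := h₁ hlt; have b₂ := h₂ hlt'; have b₂' := h₂ hlt
  rw [map_add_one] at b₁' b₂'
  have hlow : m'' - m < 1 := by exact_mod_cast (by linarith : (m'' : ℝ) - m < 1)
  have hup : -1 < m'' - m := by exact_mod_cast (by linarith : -1 < (m'' : ℝ) - m)
  rw [hm, hm'', show m'' = m by omega]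
  ring

lemma iterate_eq_iterate_add_mul {S : Set ℝ} (hS : MapsTo f₁ S S) {a : ℤ}
    (ha : ∀ θ ∈ S, f₂ θ = f₁ θ + a) {θ₀ : ℝ} (hθ₀ : θ₀ ∈ S) (n : ℕ) :
    f₂^[n] θ₀ = f₁^[n] θ₀ + n * a := by
  induction n with
  | zero => simp
  | succ n ih =>
    have hmap := f₂.map_add_int (f₁^[n] θ₀) (n * a)
    push_cast at hmap
    rw [iterate_succ_apply', iterate_succ_apply', ih, hmap, ha _ (hS.iterate n hθ₀)]
    push_cast
    ring

lemma translationNumber_eq_add_of_iterate {a : ℝ} {x : ℝ}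
    (h : ∀ n : ℕ, f₂^[n] x = f₁^[n] x + n * a) :
    f₂.translationNumber = f₁.translationNumber + a := by
  refine tendsto_nhds_unique (f₂.tendsto_iterate_div x)
    (((f₁.tendsto_iterate_div x).add tendsto_const_nhds).congr' ?_)
  filter_upwards [eventually_ne_atTop 0] with n hn
  rw [h, add_div, mul_div_cancel_left₀ _ (Nat.cast_ne_zero.2 hn)]

end CircleDeg1Lift

section IntPeriodicCover

variable {X : Type*} {P : ℝ → X}

lemma apply_add_int_eq (hP : ∀ θ θ', P θ = P θ' ↔ ∃ m : ℤ, θ = θ' + m) (θ : ℝ) (m : ℤ) :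
    P (θ + m) = P θ :=
  (hP _ _).2 ⟨m, rfl⟩

lemma apply_ne_of_lt_of_lt_add_one (hP : ∀ θ θ', P θ = P θ' ↔ ∃ m : ℤ, θ = θ' + m)
    {θ θ' : ℝ} (h : θ < θ') (h' : θ' < θ + 1) : P θ' ≠ P θ := by
  rintro hθ
  obtain ⟨m, rfl⟩ := (hP _ _).1 hθ
  have h0 : (0 : ℤ) < m := by exact_mod_cast (by linarith : (0 : ℝ) < m)
  have h1 : m < 1 := by exact_mod_cast (by linarith : (m : ℝ) < 1)
  omega

lemma map_add_one_of_lift (hP : ∀ θ θ', P θ = P θ' ↔ ∃ m : ℤ, θ = θ' + m) {g : X → X}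
    (hg : Injective g) {G : ℝ → ℝ} (hGc : Continuous G) (hG : StrictMono G)
    (hlift : ∀ θ, P (G θ) = g (P θ)) (θ : ℝ) : G (θ + 1) = G θ + 1 := by
  obtain ⟨k, hk⟩ : ∃ k : ℤ, G (θ + 1) = G θ + k := by
    rw [← hP, hlift, hlift, ← Int.cast_one, apply_add_int_eq hP]
  have hk_pos : 0 < k := by exact_mod_cast (by linarith [hG (lt_add_one θ)] : (0 : ℝ) < k)
  rcases (by omega : k = 1 ∨ 1 < k) with rfl | hk1
  · simpa using hk
  -- if `G` gained more than one full turn on `[θ, θ + 1]`, it would hit `G θ + 1` strictly inside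
  obtain ⟨θc, ⟨hθc, hθc'⟩, hGθc⟩ := intermediate_value_Ioo (lt_add_one θ).le hGc.continuousOn
    (show G θ + 1 ∈ Ioo (G θ) (G (θ + 1)) by
      refine ⟨by linarith, ?_⟩
      rw [hk]; linarith [(show (1 : ℝ) < k by exact_mod_cast hk1)])
  refine absurd (hg ?_) (apply_ne_of_lt_of_lt_add_one hP hθc hθc')
  rw [← hlift, ← hlift, hGθc, ← Int.cast_one, apply_add_int_eq hP]

theorem exists_int_translationNumber_eq_add_of_eqOn
    (hP : ∀ θ θ', P θ = P θ' ↔ ∃ m : ℤ, θ = θ' + m) (hPs : Surjective P) {g₁ g₂ : X → X}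
    {f₁ f₂ : CircleDeg1Lift} (h₁ : StrictMono f₁) (h₂ : StrictMono f₂)
    (hlift₁ : ∀ θ, P (f₁ θ) = g₁ (P θ)) (hlift₂ : ∀ θ, P (f₂ θ) = g₂ (P θ)) {B : Set X}
    (hB : B.Nonempty) (hBinv : MapsTo g₁ B B) (hag : EqOn g₁ g₂ B) :
    ∃ m : ℤ, f₂.translationNumber = f₁.translationNumber + m := by
  have hS : ∀ θ ∈ P ⁻¹' B, ∀ m : ℤ, θ + m ∈ P ⁻¹' B := fun θ hθ m => by
    rwa [mem_preimage, apply_add_int_eq hP]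
  have hint : ∀ θ ∈ P ⁻¹' B, ∃ m : ℤ, f₂ θ = f₁ θ + m := fun θ hθ =>
    (hP _ _).1 (by rw [hlift₂, hlift₁, hag hθ])
  have hmaps : MapsTo f₁ (P ⁻¹' B) (P ⁻¹' B) := fun θ hθ => by
    rw [mem_preimage, hlift₁]; exact hBinv hθ
  obtain ⟨b, hb⟩ := hB
  obtain ⟨θ₀, rfl⟩ := hPs b
  obtain ⟨a, ha⟩ := hint θ₀ hb
  refine ⟨a, CircleDeg1Lift.translationNumber_eq_add_of_iterate
    (CircleDeg1Lift.iterate_eq_iterate_add_mul hmaps (fun θ hθ => ?_) hb)⟩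
  linarith [CircleDeg1Lift.sub_eq_sub_of_forall_exists_int h₁ h₂ hS hint hb hθ]

end IntPeriodicCover

/-- Two orientation-preserving circle homeomorphisms that agree on a nonempty
invariant set have the same rotation number (mod 1). -/
theorem stmt4
    (g₁ g₂ : Metric.sphere (0:ℂ) 1 ≃ₜ Metric.sphere (0:ℂ) 1)
    (P : ℝ → Metric.sphere (0:ℂ) 1)
    (hP : ∀ θ : ℝ, (P θ : ℂ) = Complex.exp (2 * Real.pi * θ * Complex.I))
    (G₁ G₂ : ℝ ≃ₜ ℝ)
    (hmono₁ : StrictMono G₁) (hmono₂ : StrictMono G₂)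
    (hlift₁ : ∀ θ : ℝ, P (G₁ θ) = g₁ (P θ))
    (hlift₂ : ∀ θ : ℝ, P (G₂ θ) = g₂ (P θ))
    (B : Set (Metric.sphere (0:ℂ) 1))
    (hBne : B.Nonempty)
    (hBinv : g₁ '' B = B)
    (hag : Set.EqOn (⇑g₁) (⇑g₂) B)
    (x : ℝ) :
    ∃ L₁ L₂ : ℝ,
      Tendsto (fun n : ℕ => (⇑G₁)^[n] x / (n : ℝ)) atTop (𝓝 L₁) ∧
      Tendsto (fun n : ℕ => (⇑G₂)^[n] x / (n : ℝ)) atTop (𝓝 L₂) ∧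
      ∃ m : ℤ, L₁ - L₂ = (m : ℝ) := by
  have hPeq := sphere_param_eq_iff_exists_int hP
  let F₁ : CircleDeg1Lift :=
    ⟨⟨G₁, hmono₁.monotone⟩, map_add_one_of_lift hPeq g₁.injective G₁.continuous hmono₁ hlift₁⟩
  let F₂ : CircleDeg1Lift :=
    ⟨⟨G₂, hmono₂.monotone⟩, map_add_one_of_lift hPeq g₂.injective G₂.continuous hmono₂ hlift₂⟩
  obtain ⟨m, hm⟩ := exists_int_translationNumber_eq_add_of_eqOn (f₁ := F₁) (f₂ := F₂) hPeq
    (sphere_param_surjective hP) hmono₁ hmono₂ hlift₁ hlift₂ hBne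
    (mapsTo_iff_image_subset.2 hBinv.subset) hag
  exact ⟨_, _, F₁.tendsto_iterate_div x, F₂.tendsto_iterate_div x, -m, by rw [hm]; push_cast; ring⟩
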